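/- Let κ be a binary kernel on a set U with U_ref = {x ∈ U | κ(x,x) = 1}, and let Q = {Q₁,…,Q_d} be the set of equivalence classes of the induced relation ∼_κ on U_ref. For a finite subset X ⊆ U define φ⋆(X) ∈ ℝ^d by φ⋆(X)_i = |Qᵢ ∩ X|. Then for all finite subsets X, Y ⊆ U, Σ_{i=1}^{d} φ⋆(X)_i · φ⋆(Y)_i = Σ_{x ∈ X} Σ_{y ∈ Y} κ(x,y); that is, φ⋆ is a feature map of the cross product (R-convolution) kernel with binary base kernel κ. -/

import Mathlib

/-- A positive semidefinite kernel on a set `U`: a symmetric real-valued function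
all of whose finite Gram matrices are positive semidefinite. -/
def IsPSDKernel {U : Type*} (k : U → U → ℝ) : Prop :=
  (∀ x y, k x y = k y x) ∧
  ∀ (n : ℕ) (x : Fin n → U) (c : Fin n → ℝ),
    0 ≤ ∑ i, ∑ j, c i * c j * k (x i) (x j)

/-- The equivalence classes of the relation `∼_κ` induced by a binary kernel `κ`
on `U_ref = {x | κ x x = 1}`: the sets `[x]_κ = {y | κ x y = 1}` for `x ∈ U_ref`. -/
def KernelClasses {U : Type*} (κ : U → U → ℝ) : Type _ :=
  {S : Set U // ∃ x, κ x x = 1 ∧ S = {y | κ x y = 1}}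

/-!
The relation `κ x y = 1` is an equivalence relation on `U_ref` because a binary positive
semidefinite kernel cannot realise the Gram patterns `[[0, 1], [1, b]]` or
`[[1, 1, 1], [1, 1, 0], [1, 0, 1]]`. Hence `κ x y` counts the classes containing both `x` and
`y`, so `κ(x, y) = Σᵢ 1[x ∈ Qᵢ] 1[y ∈ Qᵢ]`; summing over `X × Y` turns each side into
`Σᵢ |Qᵢ ∩ X| |Qᵢ ∩ Y|`.
-/

theorem Set.ncard_inter_finset_eq_sum_indicator {α R : Type*} [AddCommMonoidWithOne R]
    (A : Set α) (X : Finset α) : ((A ∩ ↑X).ncard : R) = ∑ x ∈ X, A.indicator 1 x := by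
  classical
  have hfilter : A ∩ ↑X = ↑{x ∈ X | x ∈ A} := by
    rw [Finset.coe_filter, Set.inter_comm]
    rfl
  simp only [hfilter, Set.ncard_coe_finset, Finset.natCast_card_filter, Set.indicator_apply,
    Pi.one_apply]

namespace IsPSDKernel

variable {U : Type*} {κ : U → U → ℝ}

theorem quadForm_two_nonneg (hκ : IsPSDKernel κ) (x y : U) (s t : ℝ) :
    0 ≤ s ^ 2 * κ x x + 2 * s * t * κ x y + t ^ 2 * κ y y := by
  have h := hκ.2 2 ![x, y] ![s, t]
  simp only [Fin.sum_univ_two, Matrix.cons_val_zero, Matrix.cons_val_one] at h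
  rw [hκ.1 y x] at h
  linarith

theorem sq_le_mul (hκ : IsPSDKernel κ) (x y : U) : κ x y ^ 2 ≤ κ x x * κ y y := by
  have hx := hκ.quadForm_two_nonneg x y 1 0
  have hy := hκ.quadForm_two_nonneg x y 0 1
  have hxx : 0 ≤ κ x x * (κ x x * κ y y - κ x y ^ 2) := by
    linarith [hκ.quadForm_two_nonneg x y (κ x y) (-κ x x)]
  have hyy : 0 ≤ κ y y * (κ x x * κ y y - κ x y ^ 2) := by
    linarith [hκ.quadForm_two_nonneg x y (κ y y) (-κ x y)]
  by_contra! h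
  have ha : κ x x = 0 := le_antisymm (nonpos_of_mul_nonneg_left hxx (by linarith)) (by linarith)
  have hb : κ y y = 0 := le_antisymm (nonpos_of_mul_nonneg_left hyy (by linarith)) (by linarith)
  nlinarith [hκ.quadForm_two_nonneg x y 1 (-κ x y)]

theorem diag_eq_one_of_eq_one (hκ : IsPSDKernel κ) (hbin : ∀ x y, κ x y = 0 ∨ κ x y = 1)
    {x y : U} (hxy : κ x y = 1) : κ x x = 1 := by
  have h := hκ.sq_le_mul x y
  rw [hxy] at h
  rcases hbin x x with hx | hx
  · rcases hbin y y with hy | hy <;> norm_num [hx, hy] at h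
  · exact hx

theorem eq_one_of_eq_one_of_eq_one (hκ : IsPSDKernel κ)
    (hbin : ∀ x y, κ x y = 0 ∨ κ x y = 1) {a x z : U} (hax : κ a x = 1) (haz : κ a z = 1) :
    κ x z = 1 := by
  refine (hbin x z).resolve_left fun hxz => ?_
  have hxa : κ x a = 1 := hκ.1 x a ▸ hax
  have hza : κ z a = 1 := hκ.1 z a ▸ haz
  have h := hκ.2 3 ![a, x, z] ![-1, 1, 1]
  simp only [Fin.sum_univ_three, Matrix.cons_val_zero, Matrix.cons_val_one,
    Matrix.cons_val_two, Matrix.head_cons, Matrix.tail_cons] at h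
  rw [hκ.diag_eq_one_of_eq_one hbin hax, hκ.diag_eq_one_of_eq_one hbin hxa,
    hκ.diag_eq_one_of_eq_one hbin hza, hax, haz, hxa, hza, hxz, hκ.1 z x, hxz] at h
  norm_num at h

theorem mem_and_mem_kernelClass_iff (hκ : IsPSDKernel κ)
    (hbin : ∀ x y, κ x y = 0 ∨ κ x y = 1) (S : KernelClasses κ) {x y : U} :
    x ∈ S.1 ∧ y ∈ S.1 ↔ κ x y = 1 ∧ S.1 = {z | κ x z = 1} := by
  constructor
  · obtain ⟨_, a, -, rfl⟩ := S
    rintro ⟨hax, hay⟩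
    have hxa : κ x a = 1 := hκ.1 x a ▸ hax
    refine ⟨hκ.eq_one_of_eq_one_of_eq_one hbin hax hay,
      Set.ext fun z => ⟨fun haz => ?_, fun hxz => ?_⟩⟩
    · exact hκ.eq_one_of_eq_one_of_eq_one hbin hax haz
    · exact hκ.eq_one_of_eq_one_of_eq_one hbin hxa hxz
  · rintro ⟨hxy, hS⟩
    rw [hS]
    exact ⟨hκ.diag_eq_one_of_eq_one hbin hxy, hxy⟩

theorem eq_sum_indicator_mul_indicator (hκ : IsPSDKernel κ)
    (hbin : ∀ x y, κ x y = 0 ∨ κ x y = 1) [Fintype (KernelClasses κ)] (x y : U) :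
    κ x y = ∑ S : KernelClasses κ, S.1.indicator 1 x * S.1.indicator 1 y := by
  classical
  simp only [Set.indicator_apply, Pi.one_apply, ite_zero_mul_ite_zero, mul_one,
    hκ.mem_and_mem_kernelClass_iff hbin]
  rcases hbin x y with hxy | hxy
  · simp [hxy]
  · let Sx : KernelClasses κ := ⟨{z | κ x z = 1}, x, hκ.diag_eq_one_of_eq_one hbin hxy, rfl⟩
    have hSx (S : KernelClasses κ) : S.1 = {z | κ x z = 1} ↔ S = Sx :=
      ⟨fun h => Subtype.ext (a2 := Sx) h, fun h => h ▸ rfl⟩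
    simp only [hxy, true_and, hSx, Fintype.sum_ite_eq']

end IsPSDKernel

/-- For a binary kernel `κ` on `U` with finitely many equivalence classes
`Q₁,…,Q_d` of `∼_κ` on `U_ref`, the map `φ⋆(X)ᵢ = |Qᵢ ∩ X|` is a feature map of
the cross product (R-convolution) kernel with base kernel `κ`:
`Σᵢ φ⋆(X)ᵢ · φ⋆(Y)ᵢ = Σ_{x ∈ X} Σ_{y ∈ Y} κ(x,y)` for all finite `X, Y ⊆ U`. -/
theorem convolution_kernel_binary_feature_map {U : Type*} (κ : U → U → ℝ)
    (hpsd : IsPSDKernel κ) (hbin : ∀ x y, κ x y = 0 ∨ κ x y = 1)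
    [Fintype (KernelClasses κ)] (X Y : Finset U) :
    ∑ S : KernelClasses κ,
        (Set.ncard (S.val ∩ ↑X) : ℝ) * (Set.ncard (S.val ∩ ↑Y) : ℝ) =
      ∑ x ∈ X, ∑ y ∈ Y, κ x y := by
  calc _ = ∑ S : KernelClasses κ, ∑ x ∈ X, ∑ y ∈ Y,
          S.1.indicator 1 x * S.1.indicator 1 y := by
        simp only [Set.ncard_inter_finset_eq_sum_indicator, Finset.sum_mul_sum]
    _ = ∑ x ∈ X, ∑ y ∈ Y, ∑ S : KernelClasses κ,
          S.1.indicator 1 x * S.1.indicator 1 y := by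
        rw [Finset.sum_comm]
        exact Finset.sum_congr rfl fun _ _ => Finset.sum_comm
    _ = ∑ x ∈ X, ∑ y ∈ Y, κ x y := by
        simp only [← hpsd.eq_sum_indicator_mul_indicator hbin]
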